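/- Let {v_m, a_{m,n}} satisfy the Gauss–Lusztig q-commutation relations for GL_q(N). Define the change of variables a'_{m,1} = a_{m,1} and a'_{m,n} = q·a_{m,n}·a_{m,n−1}⁻¹ for n > 1 (assuming the a_{m,n} are invertible). Then for each m and 1 < n ≤ m: a'_{m,n} a'_{m,n−1} = q² a'_{m,n−1} a'_{m,n}, a'_{m−1,n−1} a'_{m,n} = q² a'_{m,n} a'_{m−1,n−1}, and a'_{m,n} a'_{m−1,n} = q² a'_{m−1,n} a'_{m,n}, while a'_{m,n} commutes with a'_{m',n'} whenever |m−m'| ≥ 2 or (|m−m'| ≤ 1 and |n−n'| ≥ 2). -/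

import Mathlib

/-!
Every relation in sight has the form `x y = q^k y x`, and the exponent `k` is additive in
both arguments and changes sign when one argument is inverted. Setting `a_{m,0} = 1`,
each `a'_{m,n}` is a scalar times `a_{m,n} a_{m,n-1}⁻¹`, so its exponent against
`a'_{m',n'}` is the second difference
`B(n,n') - B(n,n'-1) - B(n-1,n') + B(n-1,n'-1)` of the Gauss–Lusztig exponent `B`
of the generators. Evaluating this integer in each case gives the theorem.
-/

section QCommute

variable {K R : Type*} [Field K] [Ring R] [Algebra K R]

def QCommute (q : K) (k : ℤ) (x y : R) : Prop := x * y = q ^ k • (y * x)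

variable {q : K} {k l : ℤ} {x x' y y' : R}

theorem qCommute_zero : QCommute q 0 x y ↔ Commute x y := by
  simp [QCommute, commute_iff_eq]

theorem qCommute_two : QCommute q 2 x y ↔ x * y = q ^ 2 • (y * x) := by
  simp [QCommute]

theorem QCommute.one_left : QCommute q 0 (1 : R) y := by
  simp [QCommute]

theorem QCommute.one_right : QCommute q 0 x (1 : R) := by
  simp [QCommute]

theorem QCommute.of_exp_eq (h : QCommute q k x y) (e : k = l) : QCommute q l x y := e ▸ h

theorem QCommute.symm (hq : q ≠ 0) (h : QCommute q k x y) : QCommute q (-k) y x := by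
  rw [QCommute, h, smul_smul, ← zpow_add₀ hq, neg_add_cancel, zpow_zero, one_smul]

theorem QCommute.mul_left (hq : q ≠ 0) (h : QCommute q k x y) (h' : QCommute q l x' y) :
    QCommute q (k + l) (x * x') y := by
  rw [QCommute, mul_assoc, h', mul_smul_comm, ← mul_assoc, h, smul_mul_assoc, smul_smul,
    mul_assoc, ← zpow_add₀ hq, add_comm l]

theorem QCommute.mul_right (hq : q ≠ 0) (h : QCommute q k x y) (h' : QCommute q l x y') :
    QCommute q (k + l) x (y * y') :=
  (((h.symm hq).mul_left hq (h'.symm hq)).symm hq).of_exp_eq (by ring)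

theorem QCommute.smul_left (h : QCommute q k x y) (c : K) : QCommute q k (c • x) y := by
  rw [QCommute, smul_mul_assoc, h, mul_smul_comm, smul_comm]

theorem QCommute.smul_right (h : QCommute q k x y) (c : K) : QCommute q k x (c • y) := by
  rw [QCommute, mul_smul_comm, h, smul_mul_assoc, smul_comm]

theorem QCommute.units_inv_left (hq : q ≠ 0) {u : Rˣ} (h : QCommute q k (u : R) y) :
    QCommute q (-k) (↑u⁻¹ : R) y := by
  have h' : y * u = q ^ (-k) • (u * y) := h.symm hq
  calc (↑u⁻¹ * y : R) = ↑u⁻¹ * (y * u) * ↑u⁻¹ := by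
        rw [mul_assoc, mul_assoc, Units.mul_inv, mul_one]
    _ = q ^ (-k) • (y * ↑u⁻¹) := by
        rw [h', mul_smul_comm, smul_mul_assoc, ← mul_assoc, Units.inv_mul, one_mul]

theorem QCommute.units_inv_right (hq : q ≠ 0) {u : Rˣ} (h : QCommute q k x (u : R)) :
    QCommute q (-k) x (↑u⁻¹ : R) :=
  (((h.symm hq).units_inv_left hq).symm hq).of_exp_eq (by ring)

theorem QCommute.smul_mul_inv (hq : q ≠ 0) {k₁₁ k₁₂ k₂₁ k₂₂ : ℤ} {u v : Rˣ}
    (h₁₁ : QCommute q k₁₁ x y) (h₁₂ : QCommute q k₁₂ x (v : R))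
    (h₂₁ : QCommute q k₂₁ (u : R) y) (h₂₂ : QCommute q k₂₂ (u : R) (v : R)) (s t : K) :
    QCommute q (k₁₁ - k₁₂ - k₂₁ + k₂₂) (s • (x * ↑u⁻¹)) (t • (y * ↑v⁻¹)) := by
  have h₁ := h₁₁.mul_right hq (h₁₂.units_inv_right hq)
  have h₂ := (h₂₁.units_inv_left hq).mul_right hq (h₂₂.units_inv_left hq |>.units_inv_right hq)
  exact ((h₁.mul_left hq h₂).smul_left s |>.smul_right t).of_exp_eq (by ring)

end QCommute

section GaussLusztig

variable {K R : Type*} [Field K] [Ring R] [Algebra K R]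

structure GaussLusztigRelations (q : K) (N : ℕ) (a ainv : ℕ → ℕ → R) : Prop where
  inv : ∀ m n, 1 ≤ n → n ≤ m → m ≤ N - 1 → a m n * ainv m n = 1 ∧ ainv m n * a m n = 1
  same_row : ∀ m n n', 1 ≤ n' → n' < n → n ≤ m → m ≤ N - 1 →
    a m n * a m n' = q ^ 2 • (a m n' * a m n)
  adjacent_row : ∀ m n n', 1 ≤ n → n ≤ n' → n ≤ m → m ≤ N - 1 → n' ≤ m - 1 →
    a m n * a (m - 1) n' = q ^ 2 • (a (m - 1) n' * a m n)
  commute_far : ∀ m n m' n', m' + 2 ≤ m → Commute (a m n) (a m' n')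
  commute_adjacent_row : ∀ m n n', n' < n → Commute (a m n) (a (m - 1) n')

/-- `glExponent m n m' n'` is the `k` with `a_{m,n} a_{m',n'} = q^k a_{m',n'} a_{m,n}`;
it vanishes in column `0`, where `a_{m,0} = 1`. -/
def glExponent (m n m' n' : ℕ) : ℤ :=
  if n = 0 ∨ n' = 0 then 0
  else if m = m' then (if n' < n then 2 else if n < n' then -2 else 0)
  else if m = m' + 1 then (if n ≤ n' then 2 else 0)
  else if m' = m + 1 then (if n' ≤ n then -2 else 0)
  else 0

def withColumnZero (a : ℕ → ℕ → R) (m n : ℕ) : R := if n = 0 then 1 else a m n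

def clusterVar (q : K) (a ainv : ℕ → ℕ → R) (m n : ℕ) : R :=
  if n = 1 then a m 1 else q • (a m n * ainv m (n - 1))

def clusterExponent (m n m' n' : ℕ) : ℤ :=
  glExponent m n m' n' - glExponent m n m' (n' - 1) - glExponent m (n - 1) m' n' +
    glExponent m (n - 1) m' (n' - 1)

theorem clusterExponent_same_row {m n : ℕ} (hn : 1 < n) : clusterExponent m n m (n - 1) = 2 := by
  obtain ⟨k, rfl⟩ : ∃ k, n = k + 2 := ⟨n - 2, by omega⟩
  simp [clusterExponent, glExponent]

theorem clusterExponent_diagonal {m n : ℕ} (hn : 1 < n) (hnm : n ≤ m) :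
    clusterExponent (m - 1) (n - 1) m n = 2 := by
  obtain ⟨k, rfl⟩ : ∃ k, n = k + 2 := ⟨n - 2, by omega⟩
  obtain ⟨j, rfl⟩ : ∃ j, m = j + k + 2 := ⟨m - k - 2, by omega⟩
  simp [clusterExponent, glExponent]

theorem clusterExponent_adjacent_row {m n : ℕ} (hn : 1 < n) (hnm : n ≤ m - 1) :
    clusterExponent m n (m - 1) n = 2 := by
  obtain ⟨k, rfl⟩ : ∃ k, n = k + 2 := ⟨n - 2, by omega⟩
  obtain ⟨j, rfl⟩ : ∃ j, m = j + k + 3 := ⟨m - k - 3, by omega⟩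
  simp [clusterExponent, glExponent]

theorem clusterExponent_eq_zero {m n m' n' : ℕ}
    (h : m' + 2 ≤ m ∨ m + 2 ≤ m' ∨ ((m - m' ≤ 1 ∧ m' - m ≤ 1) ∧ (n' + 2 ≤ n ∨ n + 2 ≤ n'))) :
    clusterExponent m n m' n' = 0 := by
  unfold clusterExponent glExponent
  split_ifs <;> omega

variable {q : K} {N : ℕ} {a ainv : ℕ → ℕ → R}

namespace GaussLusztigRelations

theorem qCommute (h : GaussLusztigRelations q N a ainv) (hq : q ≠ 0) {m n m' n' : ℕ}
    (hn : 1 ≤ n) (hnm : n ≤ m) (hm : m ≤ N - 1) (hn' : 1 ≤ n') (hnm' : n' ≤ m')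
    (hm' : m' ≤ N - 1) :
    QCommute q (glExponent m n m' n') (a m n) (a m' n') := by
  unfold glExponent
  rw [if_neg (by omega)]
  split_ifs with hrow hlt hgt hup hle hdown hle'
  · subst hrow; exact qCommute_two.2 (h.same_row m n n' hn' hlt hnm hm)
  · subst hrow; exact (qCommute_two.2 (h.same_row m n' n hn hgt hnm' hm)).symm hq
  · obtain ⟨rfl, rfl⟩ : m = m' ∧ n = n' := ⟨hrow, by omega⟩
    exact qCommute_zero.2 (Commute.refl _)
  · subst hup
    exact qCommute_two.2 (by simpa using h.adjacent_row (m' + 1) n n' hn hle hnm hm (by omega))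
  · subst hup
    exact qCommute_zero.2 (by simpa using h.commute_adjacent_row (m' + 1) n n' (by omega))
  · subst hdown
    exact (qCommute_two.2 (by
      simpa using h.adjacent_row (m + 1) n' n hn' hle' hnm' hm' (by omega))).symm hq
  · subst hdown
    exact qCommute_zero.2 (by simpa using (h.commute_adjacent_row (m + 1) n' n (by omega)).symm)
  · rcases (by omega : m' + 2 ≤ m ∨ m + 2 ≤ m') with far | far
    · exact qCommute_zero.2 (h.commute_far m n m' n' far)
    · exact qCommute_zero.2 (h.commute_far m' n' m n far).symm

theorem qCommute_withColumnZero (h : GaussLusztigRelations q N a ainv) (hq : q ≠ 0)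
    {m n m' n' : ℕ} (hnm : n ≤ m) (hm : m ≤ N - 1) (hnm' : n' ≤ m') (hm' : m' ≤ N - 1) :
    QCommute q (glExponent m n m' n') (withColumnZero a m n) (withColumnZero a m' n') := by
  unfold withColumnZero
  split_ifs with hn hn'
  · exact QCommute.one_left.of_exp_eq (by simp [glExponent, hn])
  · exact QCommute.one_left.of_exp_eq (by simp [glExponent, hn])
  · exact QCommute.one_right.of_exp_eq (by simp [glExponent, *])
  · exact h.qCommute hq (by omega) hnm hm (by omega) hnm' hm'

def unit (h : GaussLusztigRelations q N a ainv) {m n : ℕ} (hnm : n ≤ m) (hm : m ≤ N - 1) :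
    Rˣ where
  val := withColumnZero a m n
  inv := withColumnZero ainv m n
  val_inv := by
    unfold withColumnZero
    split_ifs with hn
    exacts [mul_one 1, (h.inv m n (by omega) hnm hm).1]
  inv_val := by
    unfold withColumnZero
    split_ifs with hn
    exacts [mul_one 1, (h.inv m n (by omega) hnm hm).2]

theorem clusterVar_eq (h : GaussLusztigRelations q N a ainv) {m n : ℕ} (hn : 1 ≤ n)
    (hnm : n ≤ m) (hm : m ≤ N - 1) :
    clusterVar q a ainv m n =
      (if n = 1 then 1 else q) • (withColumnZero a m n * ↑(h.unit (n := n - 1) (by omega) hm)⁻¹) := by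
  unfold clusterVar
  split_ifs with h1
  · subst h1; simp [unit, withColumnZero]
  · simp [unit, withColumnZero, show n ≠ 0 by omega, show n - 1 ≠ 0 by omega]

theorem qCommute_clusterVar (h : GaussLusztigRelations q N a ainv) (hq : q ≠ 0)
    {m n m' n' : ℕ} (hn : 1 ≤ n) (hnm : n ≤ m) (hm : m ≤ N - 1) (hn' : 1 ≤ n')
    (hnm' : n' ≤ m') (hm' : m' ≤ N - 1) :
    QCommute q (clusterExponent m n m' n') (clusterVar q a ainv m n)
      (clusterVar q a ainv m' n') := by
  rw [h.clusterVar_eq hn hnm hm, h.clusterVar_eq hn' hnm' hm']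
  exact QCommute.smul_mul_inv hq (h.qCommute_withColumnZero hq hnm hm hnm' hm')
    (h.qCommute_withColumnZero hq hnm hm (by omega) hm')
    (h.qCommute_withColumnZero hq (by omega) hm hnm' hm')
    (h.qCommute_withColumnZero hq (by omega) hm (by omega) hm') _ _

end GaussLusztigRelations

end GaussLusztig

theorem stmt14_general {K R : Type*} [Field K] [Ring R] [Algebra K R]
    (q : K) (hq : q ≠ 0) (N : ℕ)
    (a ainv : ℕ → ℕ → R)
    -- invertibility of the a's
    (hinv : ∀ m n, 1 ≤ n → n ≤ m → m ≤ N - 1 →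
      a m n * ainv m n = 1 ∧ ainv m n * a m n = 1)
    -- Gauss–Lusztig q-commutation relations
    (haa : ∀ m n n', 1 ≤ n' → n' < n → n ≤ m → m ≤ N - 1 →
      a m n * a m n' = q ^ 2 • (a m n' * a m n))
    (hadj : ∀ m n n', 1 ≤ n → n ≤ n' → n ≤ m → m ≤ N - 1 → n' ≤ m - 1 →
      a m n * a (m - 1) n' = q ^ 2 • (a (m - 1) n' * a m n))
    (hcom1 : ∀ m n m' n', m' + 2 ≤ m → Commute (a m n) (a m' n'))
    (hcom2 : ∀ m n n', n' < n → Commute (a m n) (a (m - 1) n')) :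
    let a' : ℕ → ℕ → R := fun m n =>
      if n = 1 then a m 1 else q • (a m n * ainv m (n - 1))
    (∀ m n, 1 < n → n ≤ m → m ≤ N - 1 →
      a' m n * a' m (n - 1) = q ^ 2 • (a' m (n - 1) * a' m n)) ∧
    (∀ m n, 1 < n → n ≤ m → m ≤ N - 1 →
      a' (m - 1) (n - 1) * a' m n = q ^ 2 • (a' m n * a' (m - 1) (n - 1))) ∧
    (∀ m n, 1 < n → n ≤ m - 1 → m ≤ N - 1 →
      a' m n * a' (m - 1) n = q ^ 2 • (a' (m - 1) n * a' m n)) ∧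
    (∀ m n m' n', 1 ≤ n → n ≤ m → m ≤ N - 1 → 1 ≤ n' → n' ≤ m' → m' ≤ N - 1 →
      (m' + 2 ≤ m ∨ m + 2 ≤ m' ∨
        ((m - m' ≤ 1 ∧ m' - m ≤ 1) ∧ (n' + 2 ≤ n ∨ n + 2 ≤ n'))) →
      Commute (a' m n) (a' m' n')) := by
  have h : GaussLusztigRelations q N a ainv := ⟨hinv, haa, hadj, hcom1, hcom2⟩
  refine ⟨fun m n hn hnm hm => ?_, fun m n hn hnm hm => ?_, fun m n hn hnm hm => ?_,
    fun m n m' n' hn hnm hm hn' hnm' hm' hfar => ?_⟩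
  · exact qCommute_two.1 <| (h.qCommute_clusterVar hq (by omega) hnm hm (by omega) (by omega)
      hm).of_exp_eq (clusterExponent_same_row hn)
  · exact qCommute_two.1 <| (h.qCommute_clusterVar hq (by omega) (by omega) (by omega)
      (by omega) hnm hm).of_exp_eq (clusterExponent_diagonal hn hnm)
  · exact qCommute_two.1 <| (h.qCommute_clusterVar hq (by omega) (by omega) hm (by omega) hnm
      (by omega)).of_exp_eq (clusterExponent_adjacent_row hn hnm)
  · exact qCommute_zero.1 <| (h.qCommute_clusterVar hq hn hnm hm hn' hnm' hm').of_exp_eq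
      (clusterExponent_eq_zero hfar)

/-- The cluster-𝒳-type change of variables `a'_{m,1} = a_{m,1}`,
`a'_{m,n} = q·a_{m,n}·a_{m,n−1}⁻¹` for `n > 1`, applied to the Gauss–Lusztig
generators, yields the symmetric q-commutation relations. -/
theorem stmt14 {K R : Type*} [Field K] [Ring R] [Algebra K R]
    (q : K) (hq : q ≠ 0) (N : ℕ)
    (a ainv : ℕ → ℕ → R) (v : ℕ → R)
    -- invertibility of the a's
    (hinv : ∀ m n, 1 ≤ n → n ≤ m → m ≤ N - 1 →
      a m n * ainv m n = 1 ∧ ainv m n * a m n = 1)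
    -- Gauss–Lusztig q-commutation relations
    (hav : ∀ m n, 1 ≤ n → n ≤ m → m ≤ N - 1 →
      a m n * v m = q ^ 2 • (v m * a m n))
    (haa : ∀ m n n', 1 ≤ n' → n' < n → n ≤ m → m ≤ N - 1 →
      a m n * a m n' = q ^ 2 • (a m n' * a m n))
    (hadj : ∀ m n n', 1 ≤ n → n ≤ n' → n ≤ m → m ≤ N - 1 → n' ≤ m - 1 →
      a m n * a (m - 1) n' = q ^ 2 • (a (m - 1) n' * a m n))
    (hcom1 : ∀ m n m' n', m' + 2 ≤ m → Commute (a m n) (a m' n'))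
    (hcom2 : ∀ m n n', n' < n → Commute (a m n) (a (m - 1) n'))
    (hcom3 : ∀ m n m', m' ≠ m → Commute (a m n) (v m'))
    (hcom4 : ∀ m m', Commute (v m) (v m')) :
    let a' : ℕ → ℕ → R := fun m n =>
      if n = 1 then a m 1 else q • (a m n * ainv m (n - 1))
    (∀ m n, 1 < n → n ≤ m → m ≤ N - 1 →
      a' m n * a' m (n - 1) = q ^ 2 • (a' m (n - 1) * a' m n)) ∧
    (∀ m n, 1 < n → n ≤ m → m ≤ N - 1 →
      a' (m - 1) (n - 1) * a' m n = q ^ 2 • (a' m n * a' (m - 1) (n - 1))) ∧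
    (∀ m n, 1 < n → n ≤ m - 1 → m ≤ N - 1 →
      a' m n * a' (m - 1) n = q ^ 2 • (a' (m - 1) n * a' m n)) ∧
    (∀ m n m' n', 1 ≤ n → n ≤ m → m ≤ N - 1 → 1 ≤ n' → n' ≤ m' → m' ≤ N - 1 →
      (m' + 2 ≤ m ∨ m + 2 ≤ m' ∨
        ((m - m' ≤ 1 ∧ m' - m ≤ 1) ∧ (n' + 2 ≤ n ∨ n + 2 ≤ n'))) →
      Commute (a' m n) (a' m' n')) :=
  stmt14_general q hq N a ainv hinv haa hadj hcom1 hcom2
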